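/- Let F ⊣ U : C → V be an adjunction where V has finite products and C is enriched in V with copowers, and suppose F is equipped with a natural coherent isomorphism F(A × B) ≅ A ⊗ F(B). Then F is naturally isomorphic to the functor A ↦ A ⊗ F(1), and consequently the monad U F is naturally isomorphic to the linear-use state monad A ↦ C(F(1), A ⊗ F(1)). -/

import Mathlib

/-!
Evaluating the strength `F(A × B) ≅ A ⊗ F(B)` at `B = 1` and precomposing with `A ≅ A × 1`
gives `F ≅ (- ⊗ F(1))`. Adjunctions with isomorphic left adjoints induce isomorphic monads: the
right adjoints are then isomorphic through the conjugate of the isomorphism, and the unit and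
multiplication are compatible with it by the defining identities of conjugates.
-/

open CategoryTheory CategoryTheory.Limits

namespace CategoryTheory.Adjunction

variable {C D : Type*} [Category C] [Category D]

def toMonadIsoOfLeftIso {L L' : C ⥤ D} {R R' : D ⥤ C}
    (adj : L ⊣ R) (adj' : L' ⊣ R') (e : L ≅ L') : adj.toMonad ≅ adj'.toMonad :=
  let ρ := conjugateEquiv adj adj' e.inv
  have hε (X : C) : L'.map (ρ.app (L.obj X) ≫ R'.map (e.hom.app X)) ≫
      adj'.counit.app (L'.obj X) = e.inv.app _ ≫ adj.counit.app (L.obj X) ≫ e.hom.app X := by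
    have hcounit := adj'.counit.naturality (e.hom.app X)
    dsimp at hcounit
    rw [L'.map_comp, Category.assoc, hcounit,
      reassoc_of% conjugateEquiv_counit adj adj' e.inv (L.obj X)]
  MonadIso.mk (Functor.isoWhiskerLeft L (conjugateIsoEquiv adj adj' e.symm) ≪≫
      Functor.isoWhiskerRight e R')
    (fun X => by
      change adj.unit.app X ≫ ρ.app (L.obj X) ≫ R'.map (e.hom.app X) = adj'.unit.app X
      rw [reassoc_of% unit_conjugateEquiv adj adj' e.inv X, ← R'.map_comp, e.inv_hom_id_app,
        R'.map_id, Category.comp_id])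
    (fun X => by
      change R.map (adj.counit.app (L.obj X)) ≫ ρ.app (L.obj X) ≫ R'.map (e.hom.app X) =
        (R.map (L.map (ρ.app (L.obj X) ≫ R'.map (e.hom.app X))) ≫
          ρ.app (L.obj (R'.obj (L'.obj X))) ≫ R'.map (e.hom.app (R'.obj (L'.obj X)))) ≫
          R'.map (adj'.counit.app (L'.obj X))
      simp only [Category.assoc]
      rw [ρ.naturality_assoc, ← R'.map_comp, ← R'.map_comp, e.hom.naturality_assoc,
        hε, e.hom_inv_id_app_assoc, R'.map_comp]
      exact ρ.naturality_assoc _ _)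

end CategoryTheory.Adjunction

section

variable {V C : Type*} [Category V] [Category C] [HasBinaryProducts V] [HasTerminal V]

variable (V) in
noncomputable def CategoryTheory.Limits.prod.rightUnitorNatIso : 𝟭 V ≅ prod.functor.flip.obj (⊤_ V) :=
  NatIso.ofComponents (fun A => (prod.rightUnitor A).symm)
    (fun f => (prod_rightUnitor_inv_naturality f).symm)

noncomputable def CategoryTheory.Functor.isoFlipObjTerminalOfProdIso (act : V ⥤ C ⥤ C) (F : V ⥤ C)
    (str : (prod.functor ⋙ (Functor.whiskeringRight V V C).obj F) ≅
      (act ⋙ (Functor.whiskeringLeft V C C).obj F)) :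
    F ≅ act.flip.obj (F.obj (⊤_ V)) :=
  F.leftUnitor.symm ≪≫ Functor.isoWhiskerRight (prod.rightUnitorNatIso V) F ≪≫
    Functor.isoWhiskerRight str ((evaluation V C).obj (⊤_ V))

end

/-- Let `(V, C)` be an enriched model: `V` has finite products and acts on `C`
via `act : V ⥤ C ⥤ C`, with right adjoints `H X` to `(- ⊗ X)` (copowers and
enrichment).  Suppose `F ⊣ U : C → V` is an adjunction together with a natural
isomorphism `F(A ⨯ B) ≅ A ⊗ F(B)`.  Then `F` is naturally isomorphic to the
functor `A ↦ A ⊗ F(1)`, and consequently the monad `U F` is isomorphic (as a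
monad) to the linear-use state monad `A ↦ C(F(1), A ⊗ F(1))` induced by the
state object `F(1)`. -/
theorem stmt15 {V C : Type*} [Category V] [Category C] [HasFiniteProducts V]
    (act : V ⥤ C ⥤ C)
    (H : C → (C ⥤ V))
    (adj : ∀ X : C, act.flip.obj X ⊣ H X)
    (F : V ⥤ C) (U : C ⥤ V) (FU : F ⊣ U)
    (str : (prod.functor ⋙ (Functor.whiskeringRight V V C).obj F) ≅
      (act ⋙ (Functor.whiskeringLeft V C C).obj F)) :
    Nonempty (F ≅ act.flip.obj (F.obj (⊤_ V))) ∧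
    Nonempty ((FU.toMonad : Monad V) ≅ (adj (F.obj (⊤_ V))).toMonad) := by
  let e := Functor.isoFlipObjTerminalOfProdIso act F str
  exact ⟨⟨e⟩, ⟨FU.toMonadIsoOfLeftIso (adj _) e⟩⟩
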